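/- Let p be a prime and let S be a ℤ_p-algebra that is finitely generated and torsion-free as a ℤ_p-module. For a natural number N, define S_N = { c + ∑_{i=1}^N p^i h_i(z) : c ∈ S, h_i(z) ∈ R(S), deg(h_i) ≤ 2i − 1 } and T_N = S_N + { c + ∑_{i=1}^M p^i h_i(z) : M ≥ 1, c ∈ S, h_i(z) ∈ R(S), deg(h_i) ≤ 2i − 2 }. Then the ℤ_p-subalgebra of R(S) generated by S_N is contained in T_N. -/
import Mathlib


open TensorProduct

/-- `f` belongs to `R(S)`: a polynomial with coefficients in `ℚ_p ⊗_{ℤ_p} S`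
whose value at every `z ∈ ℤ_p` lies in `S` (identified with `S ⊗ 1`). -/
def MemRS (p : ℕ) [Fact p.Prime] {S : Type*} [CommRing S] [Algebra ℤ_[p] S]
    (f : Polynomial (ℚ_[p] ⊗[ℤ_[p]] S)) : Prop :=
  ∀ z : ℤ_[p], ∃ s : S,
    f.eval (algebraMap ℤ_[p] (ℚ_[p] ⊗[ℤ_[p]] S) z) = (1 : ℚ_[p]) ⊗ₜ[ℤ_[p]] s

/-- The set `S_N = { c + ∑_{i=1}^N pⁱ hᵢ(z) : c ∈ S, hᵢ ∈ R(S), deg hᵢ ≤ 2i−1 }`. -/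
def SetSN (p : ℕ) [Fact p.Prime] (S : Type*) [CommRing S] [Algebra ℤ_[p] S]
    (N : ℕ) : Set (Polynomial (ℚ_[p] ⊗[ℤ_[p]] S)) :=
  {f | ∃ (c : S) (h : Fin N → Polynomial (ℚ_[p] ⊗[ℤ_[p]] S)),
    (∀ i, MemRS p (h i)) ∧ (∀ i : Fin N, (h i).natDegree ≤ 2 * ((i : ℕ) + 1) - 1) ∧
    f = Polynomial.C ((1 : ℚ_[p]) ⊗ₜ[ℤ_[p]] c)
        + ∑ i : Fin N, (p : Polynomial (ℚ_[p] ⊗[ℤ_[p]] S)) ^ ((i : ℕ) + 1) * h i}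

/-- The set `T_N = S_N + { c + ∑_{i=1}^M pⁱ hᵢ(z) : M ≥ 1, c ∈ S, hᵢ ∈ R(S),
deg hᵢ ≤ 2i−2 }`. -/
def SetTN (p : ℕ) [Fact p.Prime] (S : Type*) [CommRing S] [Algebra ℤ_[p] S]
    (N : ℕ) : Set (Polynomial (ℚ_[p] ⊗[ℤ_[p]] S)) :=
  {f | ∃ g ∈ SetSN p S N, ∃ (M : ℕ) (c : S) (h : Fin M → Polynomial (ℚ_[p] ⊗[ℤ_[p]] S)),
    1 ≤ M ∧ (∀ i, MemRS p (h i)) ∧ (∀ i : Fin M, (h i).natDegree ≤ 2 * ((i : ℕ) + 1) - 2) ∧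
    f = g + Polynomial.C ((1 : ℚ_[p]) ⊗ₜ[ℤ_[p]] c)
        + ∑ i : Fin M, (p : Polynomial (ℚ_[p] ⊗[ℤ_[p]] S)) ^ ((i : ℕ) + 1) * h i}

section Aux

variable (p : ℕ) [Fact p.Prime] {S : Type*} [CommRing S] [Algebra ℤ_[p] S]

local notation "Q" => ℚ_[p] ⊗[ℤ_[p]] S

lemma memRS_zero : MemRS p (0 : Polynomial Q) :=
  fun _ => ⟨0, by simp⟩

lemma memRS_add {f g : Polynomial Q} (hf : MemRS p f) (hg : MemRS p g) :
    MemRS p (f + g) := by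
  intro z
  obtain ⟨s, hs⟩ := hf z; obtain ⟨t, ht⟩ := hg z
  exact ⟨s + t, by rw [Polynomial.eval_add, hs, ht, TensorProduct.tmul_add]⟩

lemma memRS_mul {f g : Polynomial Q} (hf : MemRS p f) (hg : MemRS p g) :
    MemRS p (f * g) := by
  intro z
  obtain ⟨s, hs⟩ := hf z; obtain ⟨t, ht⟩ := hg z
  exact ⟨s * t, by
    rw [Polynomial.eval_mul, hs, ht, Algebra.TensorProduct.tmul_mul_tmul, one_mul]⟩

lemma memRS_C (c : S) : MemRS p (Polynomial.C ((1 : ℚ_[p]) ⊗ₜ[ℤ_[p]] c)) :=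
  fun _ => ⟨c, by simp⟩

/-- Sums truncation helper. -/
lemma sum_trunc {M M' : ℕ} (hMM : M ≤ M') (H : ℕ → Polynomial Q) :
    ∑ i ∈ Finset.range M', (p : Polynomial Q) ^ (i + 1) *
        (if i < M then H i else 0)
      = ∑ i ∈ Finset.range M, (p : Polynomial Q) ^ (i + 1) * H i := by
  rw [← Finset.sum_subset (Finset.range_subset_range.mpr hMM)
    (fun x _ hxs => by rw [if_neg (by simpa using hxs), mul_zero])]
  exact Finset.sum_congr rfl fun i hi => by rw [if_pos (Finset.mem_range.mp hi)]

/-- The "B part": `c + ∑ pⁱ hᵢ` with `deg hᵢ ≤ 2i − 2` (ℕ-indexed, flexible length). -/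
def BSet : Set (Polynomial Q) :=
  {f | ∃ (c : S) (H : ℕ → Polynomial Q) (M : ℕ),
    (∀ i, MemRS p (H i)) ∧ (∀ i, (H i).natDegree ≤ 2 * i) ∧
    f = Polynomial.C ((1 : ℚ_[p]) ⊗ₜ[ℤ_[p]] c)
        + ∑ i ∈ Finset.range M, (p : Polynomial Q) ^ (i + 1) * H i}

lemma BSet_C (c : S) : Polynomial.C ((1 : ℚ_[p]) ⊗ₜ[ℤ_[p]] c) ∈ BSet p :=
  ⟨c, 0, 0, fun _ => memRS_zero p, fun _ => by simp, by simp⟩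

lemma BSet_zero : (0 : Polynomial Q) ∈ BSet p := by
  have := BSet_C p (0 : S)
  simpa using this

lemma BSet_add {f g : Polynomial Q} (hf : f ∈ BSet p) (hg : g ∈ BSet p) :
    f + g ∈ BSet p := by
  obtain ⟨c1, H1, M1, hmem1, hdeg1, rfl⟩ := hf
  obtain ⟨c2, H2, M2, hmem2, hdeg2, rfl⟩ := hg
  refine ⟨c1 + c2,
    fun n => (if n < M1 then H1 n else 0) + (if n < M2 then H2 n else 0),
    max M1 M2, ?_, ?_, ?_⟩
  · intro i
    refine memRS_add p ?_ ?_ <;> split <;>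
      first | exact hmem1 _ | exact hmem2 _ | exact memRS_zero p
  · intro i
    refine le_trans (Polynomial.natDegree_add_le _ _) (max_le ?_ ?_) <;> split <;>
      first | exact hdeg1 _ | exact hdeg2 _ | simp
  · have e1 := sum_trunc p (le_max_left M1 M2) H1
    have e2 := sum_trunc p (le_max_right M1 M2) H2
    rw [TensorProduct.tmul_add, map_add, ← e1, ← e2]
    simp only [mul_add, Finset.sum_add_distrib]
    ring

lemma BSet_sum {ι : Type*} (s : Finset ι) (f : ι → Polynomial Q)
    (hf : ∀ i ∈ s, f i ∈ BSet p) : (∑ i ∈ s, f i) ∈ BSet p :=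
  Finset.sum_induction f (· ∈ BSet p) (fun _ _ => BSet_add p) (BSet_zero p) hf

lemma BSet_term {k : ℕ} {t : Polynomial Q} (ht : MemRS p t)
    (hd : t.natDegree ≤ 2 * k) : (p : Polynomial Q) ^ (k + 1) * t ∈ BSet p := by
  refine ⟨0, fun n => if n = k then t else 0, k + 1, ?_, ?_, ?_⟩
  · intro i; dsimp only; split
    · exact ht
    · exact memRS_zero p
  · intro i; dsimp only; split
    · subst ‹i = k›; exact hd
    · simp
  · rw [Finset.sum_eq_single_of_mem k (Finset.self_mem_range_succ k)
      (fun i _ hik => by simp [if_neg hik])]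
    simp

lemma BSet_Cmul {f : Polynomial Q} (c : S) (hf : f ∈ BSet p) :
    Polynomial.C ((1 : ℚ_[p]) ⊗ₜ[ℤ_[p]] c) * f ∈ BSet p := by
  obtain ⟨c1, H, M, hmem, hdeg, rfl⟩ := hf
  refine ⟨c * c1, fun n => Polynomial.C ((1 : ℚ_[p]) ⊗ₜ[ℤ_[p]] c) * H n, M,
    fun i => memRS_mul p (memRS_C p c) (hmem i),
    fun i => le_trans (Polynomial.natDegree_C_mul_le _ _) (hdeg i), ?_⟩
  rw [mul_add, ← Polynomial.C_mul, Algebra.TensorProduct.tmul_mul_tmul, one_mul,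
    Finset.mul_sum]
  congr 1
  exact Finset.sum_congr rfl fun i _ => by ring

lemma BSet_mul {f g : Polynomial Q} (hf : f ∈ BSet p) (hg : g ∈ BSet p) :
    f * g ∈ BSet p := by
  obtain ⟨c1, H1, M1, hmem1, hdeg1, rfl⟩ := hf
  obtain ⟨c2, H2, M2, hmem2, hdeg2, rfl⟩ := hg
  rw [add_mul]
  refine BSet_add p (BSet_Cmul p c1 ⟨c2, H2, M2, hmem2, hdeg2, rfl⟩) ?_
  rw [mul_add]
  refine BSet_add p ?_ ?_
  · rw [mul_comm]
    exact BSet_Cmul p c2 ⟨0, H1, M1, hmem1, hdeg1, by simp⟩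
  · rw [Finset.sum_mul_sum]
    refine BSet_sum p _ _ fun i _ => BSet_sum p _ _ fun j _ => ?_
    have key : (p : Polynomial Q) ^ (i + 1) * H1 i * ((p : Polynomial Q) ^ (j + 1) * H2 j)
        = (p : Polynomial Q) ^ ((i + j + 1) + 1) * (H1 i * H2 j) := by
      rw [show (i + j + 1) + 1 = (i + 1) + (j + 1) by ring, pow_add]; ring
    rw [key]
    refine BSet_term p (memRS_mul p (hmem1 i) (hmem2 j)) ?_
    calc (H1 i * H2 j).natDegree ≤ (H1 i).natDegree + (H2 j).natDegree :=
          Polynomial.natDegree_mul_le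
      _ ≤ 2 * i + 2 * j := Nat.add_le_add (hdeg1 i) (hdeg2 j)
      _ ≤ 2 * (i + j + 1) := by omega

variable (S) in
/-- `T` as `S_N + BSet`. -/
def TSet (N : ℕ) : Set (Polynomial Q) :=
  {f | ∃ g ∈ SetSN p S N, ∃ b ∈ BSet p, f = g + b}

lemma SN_zero (N : ℕ) : (0 : Polynomial Q) ∈ SetSN p S N :=
  ⟨0, fun _ => 0, fun _ => memRS_zero p, fun _ => by simp, by simp⟩

lemma SN_add {N : ℕ} {f g : Polynomial Q} (hf : f ∈ SetSN p S N)
    (hg : g ∈ SetSN p S N) : f + g ∈ SetSN p S N := by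
  obtain ⟨c1, h1, hmem1, hdeg1, rfl⟩ := hf
  obtain ⟨c2, h2, hmem2, hdeg2, rfl⟩ := hg
  refine ⟨c1 + c2, fun i => h1 i + h2 i,
    fun i => memRS_add p (hmem1 i) (hmem2 i),
    fun i => le_trans (Polynomial.natDegree_add_le _ _) (max_le (hdeg1 i) (hdeg2 i)), ?_⟩
  rw [TensorProduct.tmul_add, map_add]
  simp only [mul_add, Finset.sum_add_distrib]
  ring

lemma SN_Cmul {N : ℕ} {f : Polynomial Q} (c : S) (hf : f ∈ SetSN p S N) :
    Polynomial.C ((1 : ℚ_[p]) ⊗ₜ[ℤ_[p]] c) * f ∈ SetSN p S N := by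
  obtain ⟨c1, h, hmem, hdeg, rfl⟩ := hf
  refine ⟨c * c1, fun i => Polynomial.C ((1 : ℚ_[p]) ⊗ₜ[ℤ_[p]] c) * h i,
    fun i => memRS_mul p (memRS_C p c) (hmem i),
    fun i => le_trans (Polynomial.natDegree_C_mul_le _ _) (hdeg i), ?_⟩
  rw [mul_add, ← Polynomial.C_mul, Algebra.TensorProduct.tmul_mul_tmul, one_mul,
    Finset.mul_sum]
  congr 1
  exact Finset.sum_congr rfl fun i _ => by ring

lemma TSet_add {N : ℕ} {f g : Polynomial Q} (hf : f ∈ TSet p S N)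
    (hg : g ∈ TSet p S N) : f + g ∈ TSet p S N := by
  obtain ⟨g1, hg1, b1, hb1, rfl⟩ := hf
  obtain ⟨g2, hg2, b2, hb2, rfl⟩ := hg
  exact ⟨g1 + g2, SN_add p hg1 hg2, b1 + b2, BSet_add p hb1 hb2, by ring⟩

lemma SN_subset_TSet {N : ℕ} : SetSN p S N ⊆ TSet p S N :=
  fun f hf => ⟨f, hf, 0, BSet_zero p, by ring⟩

lemma BSet_subset_TSet {N : ℕ} {f : Polynomial Q} (hf : f ∈ BSet p) :
    f ∈ TSet p S N :=
  ⟨0, SN_zero p N, f, hf, by ring⟩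

lemma mul_SN_BSet {N : ℕ} {f b : Polynomial Q} (hf : f ∈ SetSN p S N)
    (hb : b ∈ BSet p) : f * b ∈ TSet p S N := by
  obtain ⟨c1, h1, hmem1, hdeg1, rfl⟩ := hf
  obtain ⟨c2, H2, M2, hmem2, hdeg2, rfl⟩ := hb
  rw [add_mul]
  refine TSet_add p (BSet_subset_TSet p
      (BSet_Cmul p c1 ⟨c2, H2, M2, hmem2, hdeg2, rfl⟩)) ?_
  rw [mul_add]
  refine TSet_add p ?_ ?_
  · rw [mul_comm]
    exact SN_subset_TSet p (SN_Cmul p c2 ⟨0, h1, hmem1, hdeg1, by simp⟩)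
  · refine BSet_subset_TSet p ?_
    rw [Finset.sum_mul_sum]
    refine BSet_sum p _ _ fun i _ => BSet_sum p _ _ fun j _ => ?_
    have key : (p : Polynomial Q) ^ ((i : ℕ) + 1) * h1 i
          * ((p : Polynomial Q) ^ (j + 1) * H2 j)
        = (p : Polynomial Q) ^ (((i : ℕ) + j + 1) + 1) * (h1 i * H2 j) := by
      rw [show ((i : ℕ) + j + 1) + 1 = ((i : ℕ) + 1) + (j + 1) by ring, pow_add]; ring
    rw [key]
    refine BSet_term p (memRS_mul p (hmem1 i) (hmem2 j)) ?_
    calc (h1 i * H2 j).natDegree ≤ (h1 i).natDegree + (H2 j).natDegree :=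
          Polynomial.natDegree_mul_le
      _ ≤ (2 * ((i : ℕ) + 1) - 1) + 2 * j := Nat.add_le_add (hdeg1 i) (hdeg2 j)
      _ ≤ 2 * ((i : ℕ) + j + 1) := by omega

lemma mul_SN_SN {N : ℕ} {f g : Polynomial Q} (hf : f ∈ SetSN p S N)
    (hg : g ∈ SetSN p S N) : f * g ∈ TSet p S N := by
  obtain ⟨c1, h1, hmem1, hdeg1, rfl⟩ := hf
  obtain ⟨c2, h2, hmem2, hdeg2, rfl⟩ := hg
  rw [add_mul]
  refine TSet_add p
    (SN_subset_TSet p (SN_Cmul p c1 ⟨c2, h2, hmem2, hdeg2, rfl⟩)) ?_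
  rw [mul_add]
  refine TSet_add p ?_ ?_
  · rw [mul_comm]
    exact SN_subset_TSet p (SN_Cmul p c2 ⟨0, h1, hmem1, hdeg1, by simp⟩)
  · refine BSet_subset_TSet p ?_
    rw [Finset.sum_mul_sum]
    refine BSet_sum p _ _ fun i _ => BSet_sum p _ _ fun j _ => ?_
    have key : (p : Polynomial Q) ^ ((i : ℕ) + 1) * h1 i
          * ((p : Polynomial Q) ^ ((j : ℕ) + 1) * h2 j)
        = (p : Polynomial Q) ^ (((i : ℕ) + (j : ℕ) + 1) + 1) * (h1 i * h2 j) := by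
      rw [show ((i : ℕ) + (j : ℕ) + 1) + 1 = ((i : ℕ) + 1) + ((j : ℕ) + 1) by ring,
        pow_add]; ring
    rw [key]
    refine BSet_term p (memRS_mul p (hmem1 i) (hmem2 j)) ?_
    calc (h1 i * h2 j).natDegree ≤ (h1 i).natDegree + (h2 j).natDegree :=
          Polynomial.natDegree_mul_le
      _ ≤ (2 * ((i : ℕ) + 1) - 1) + (2 * ((j : ℕ) + 1) - 1) :=
          Nat.add_le_add (hdeg1 i) (hdeg2 j)
      _ ≤ 2 * ((i : ℕ) + (j : ℕ) + 1) := by omega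

lemma TSet_mul {N : ℕ} {f g : Polynomial Q} (hf : f ∈ TSet p S N)
    (hg : g ∈ TSet p S N) : f * g ∈ TSet p S N := by
  obtain ⟨g1, hg1, b1, hb1, rfl⟩ := hf
  obtain ⟨g2, hg2, b2, hb2, rfl⟩ := hg
  have e : (g1 + b1) * (g2 + b2) = g1 * g2 + g1 * b2 + g2 * b1 + b1 * b2 := by ring
  rw [e]
  exact TSet_add p (TSet_add p (TSet_add p (mul_SN_SN p hg1 hg2)
    (mul_SN_BSet p hg1 hb2)) (mul_SN_BSet p hg2 hb1))
    (BSet_subset_TSet p (BSet_mul p hb1 hb2))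

lemma TSet_algebraMap {N : ℕ} (z : ℤ_[p]) :
    algebraMap ℤ_[p] (Polynomial Q) z ∈ TSet p S N := by
  have e1 : algebraMap ℤ_[p] (Polynomial Q) z
      = Polynomial.C (algebraMap ℤ_[p] Q z) := rfl
  have e2 : algebraMap ℤ_[p] Q z = (1 : ℚ_[p]) ⊗ₜ[ℤ_[p]] (algebraMap ℤ_[p] S z) := by
    rw [Algebra.TensorProduct.algebraMap_apply, Algebra.algebraMap_eq_smul_one,
      Algebra.algebraMap_eq_smul_one (A := S), ← TensorProduct.smul_tmul]
  rw [e1, e2]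
  exact SN_subset_TSet p ⟨algebraMap ℤ_[p] S z, fun _ => 0,
    fun _ => memRS_zero p, fun _ => by simp, by simp⟩

lemma TSet_subset_SetTN {N : ℕ} : TSet p S N ⊆ SetTN p S N := by
  rintro f ⟨g, hg, b, ⟨c, H, M, hmem, hdeg, rfl⟩, rfl⟩
  refine ⟨g, hg, M + 1, c, fun i => if (i : ℕ) < M then H i else 0,
    Nat.le_add_left 1 M, ?_, ?_, ?_⟩
  · intro i; dsimp only; split
    · exact hmem _
    · exact memRS_zero p
  · intro i; dsimp only; split
    · exact le_trans (hdeg _) (by omega)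
    · simp
  · rw [add_assoc]
    congr 1
    congr 1
    rw [Fin.sum_univ_eq_sum_range
      (fun i => (p : Polynomial Q) ^ (i + 1) * (if i < M then H i else 0))]
    exact (sum_trunc p (Nat.le_succ M) H).symm

end Aux

/-- **Lemma 3.7.** Let `p` be a prime and `S` a `ℤ_p`-algebra that is finitely
generated and torsion-free as a `ℤ_p`-module. Then the `ℤ_p`-subalgebra of
`R(S)` generated by `S_N` is contained in `T_N`. -/
theorem stmt12 (p : ℕ) [Fact p.Prime] (S : Type*) [CommRing S] [Algebra ℤ_[p] S]
    [Module.Finite ℤ_[p] S] [NoZeroSMulDivisors ℤ_[p] S] (N : ℕ) :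
    (Algebra.adjoin ℤ_[p] (SetSN p S N) : Set (Polynomial (ℚ_[p] ⊗[ℤ_[p]] S)))
      ⊆ SetTN p S N := by
  intro x hx
  refine TSet_subset_SetTN p ?_
  induction hx using Algebra.adjoin_induction with
  | mem f hf => exact SN_subset_TSet p hf
  | algebraMap z => exact TSet_algebraMap p z
  | add f g _ _ hf hg => exact TSet_add p hf hg
  | mul f g _ _ hf hg => exact TSet_mul p hf hg
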